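/- With probability one, y₁ ≠ 0 and y₂ ≠ W^k · y₁ for every k ∈ {0,1,…,n−1}; in other words, a consistent pair of measurements associated with two or more nonzero elements almost surely fails the ratio test. -/

import Mathlib

open MeasureTheory ProbabilityTheory Real

/-- The uniform probability measure on the unit circle `{z ∈ ℂ : |z| = 1}`. -/
noncomputable def uniformCircle : Measure ℂ :=
  Measure.map (fun θ : ℝ => Complex.exp (θ * Complex.I))
    ((ENNReal.ofReal (2 * Real.pi))⁻¹ • (volume.restrict (Set.Ioc 0 (2 * Real.pi))))

/-!
A linear form `∑ j ∈ S, r j * c j` with `c j₀ ≠ 0` can only vanish when `r j₀ * c j₀` equals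
minus the sum of the other terms. These are independent, and the law of `r j₀ * c j₀` has no
atoms, so by Fubini on the joint law the event is null. Both `y₁` and, for each `k < n`,
`y₂ - W ^ k * y₁ = ∑ j ∈ S, r j * ((W ^ j - W ^ k) * β j)` are such forms: as `W` is a primitive
`n`-th root of unity and `S` has two elements, some `j ∈ S` has `W ^ j ≠ W ^ k`.
-/

open scoped ENNReal

namespace MeasureTheory

variable {α β : Type*} [MeasurableSpace α] [MeasurableSpace β] {μ : Measure α}

instance Measure.smul.instNullSingletonClass [NullSingletonClass μ] (c : ℝ≥0∞) :
    NullSingletonClass (c • μ) :=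
  ⟨fun x => by simp⟩

theorem Measure.nullSingletonClass_map_of_countable_preimage [MeasurableSingletonClass β]
    [NullSingletonClass μ] {f : α → β} (hf : ∀ y, (f ⁻¹' {y}).Countable) :
    NullSingletonClass (μ.map f) := by
  refine ⟨fun y => ?_⟩
  by_cases hfm : AEMeasurable f μ
  · rw [Measure.map_apply_of_aemeasurable hfm (measurableSet_singleton y)]
    exact (hf y).measure_zero μ
  · simp [Measure.map_of_not_aemeasurable hfm]

end MeasureTheory

namespace ProbabilityTheory

variable {Ω α β : Type*} [MeasurableSpace Ω] [MeasurableSpace α] [MeasurableSpace β]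
  {μ : Measure Ω}

theorem IndepFun.ae_ne_comp [IsFiniteMeasure μ] [MeasurableEq β] {X : Ω → α} {Y : Ω → β}
    (hXY : IndepFun X Y μ) (hX : AEMeasurable X μ) (hY : AEMeasurable Y μ)
    [NullSingletonClass (μ.map Y)] {f : α → β} (hf : Measurable f) :
    ∀ᵐ ω ∂μ, Y ω ≠ f (X ω) := by
  have hgraph : MeasurableSet {p : α × β | p.2 = f p.1} :=
    measurableSet_eq_fun measurable_snd (hf.comp measurable_fst)
  rw [ae_iff]
  simp only [ne_eq, not_not]
  calc μ {ω | Y ω = f (X ω)} = μ.map (fun ω => (X ω, Y ω)) {p | p.2 = f p.1} :=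
        (Measure.map_apply_of_aemeasurable (hX.prodMk hY) hgraph).symm
    _ = (μ.map X).prod (μ.map Y) {p | p.2 = f p.1} := by
        rw [(indepFun_iff_map_prod_eq_prod_map_map hX hY).1 hXY]
    _ = ∫⁻ x, μ.map Y {f x} ∂μ.map X := Measure.prod_apply hgraph
    _ = 0 := by simp

variable {ι 𝕜 : Type*} [Ring 𝕜] [NoZeroDivisors 𝕜] [MeasurableSpace 𝕜] [MeasurableEq 𝕜]
  [MeasurableMul 𝕜] [MeasurableAdd₂ 𝕜] [MeasurableNeg 𝕜]

theorem iIndepFun.ae_sum_mul_ne_zero {r : ι → Ω → 𝕜} (hr : iIndepFun r μ)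
    (hmeas : ∀ j, AEMeasurable (r j) μ) {S : Finset ι} {c : ι → 𝕜} {j₀ : ι} (hj₀ : j₀ ∈ S)
    (hc : c j₀ ≠ 0) [NullSingletonClass (μ.map (r j₀))] :
    ∀ᵐ ω ∂μ, ∑ j ∈ S, r j ω * c j ≠ 0 := by
  classical
  have := hr.isProbabilityMeasure
  set g : ι → Ω → 𝕜 := fun j ω => r j ω * c j
  have hg : iIndepFun g μ := hr.comp (fun j x => x * c j) fun j => measurable_mul_const _
  have hgmeas : ∀ j, AEMeasurable (g j) μ := fun j => (hmeas j).mul_const _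
  have : NullSingletonClass (μ.map (g j₀)) := by
    have hmap : μ.map (g j₀) = (μ.map (r j₀)).map (· * c j₀) :=
      ((measurable_mul_const _).aemeasurable.map_map_of_aemeasurable (hmeas j₀)).symm
    rw [hmap]
    exact Measure.nullSingletonClass_map_of_countable_preimage fun y =>
      (Set.subsingleton_singleton.preimage (mul_left_injective₀ hc)).countable
  have hindep := hg.indepFun_finsetSum_of_notMem₀ hgmeas (S.notMem_erase j₀)
  filter_upwards [hindep.ae_ne_comp (Finset.aemeasurable_sum _ fun j _ => hgmeas j) (hgmeas j₀)
    measurable_neg] with ω hω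
  rw [← Finset.add_sum_erase S _ hj₀]
  simpa [g, Finset.sum_apply, add_eq_zero_iff_eq_neg] using hω

end ProbabilityTheory

theorem Complex.countable_preimage_exp_mul_I (z : ℂ) :
    ((fun θ : ℝ => Complex.exp (θ * Complex.I)) ⁻¹' {z}).Countable := by
  rcases Set.eq_empty_or_nonempty ((fun θ : ℝ => Complex.exp (θ * Complex.I)) ⁻¹' {z})
    with h | ⟨θ₀, hθ₀⟩
  · simp [h]
  refine (Set.countable_range fun m : ℤ => θ₀ + m * (2 * π)).mono fun θ hθ => ?_
  have : Circle.exp θ = Circle.exp θ₀ := Subtype.ext (by simp_all)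
  obtain ⟨m, rfl⟩ := Circle.exp_eq_exp.1 this
  exact ⟨m, rfl⟩

instance : IsProbabilityMeasure uniformCircle := by
  have h : volume (Set.Ioc 0 (2 * π)) = ENNReal.ofReal (2 * π) := by simp [Real.volume_Ioc]
  have : IsProbabilityMeasure
      ((volume (Set.Ioc 0 (2 * π)))⁻¹ • volume.restrict (Set.Ioc 0 (2 * π))) :=
    cond_isProbabilityMeasure_of_finite (by simp [h, pi_pos])
      (by rw [h]; exact ENNReal.ofReal_ne_top)
  rw [uniformCircle, ← h]
  exact Measure.isProbabilityMeasure_map (by fun_prop)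

instance : NullSingletonClass uniformCircle :=
  Measure.nullSingletonClass_map_of_countable_preimage Complex.countable_preimage_exp_mul_I

theorem multiton_fails_ratio_test_general
    {Ω : Type} [MeasurableSpace Ω] (P : Measure Ω) [IsProbabilityMeasure P]
    (n : ℕ) (r : Fin n → Ω → ℂ)
    (hindep : iIndepFun r P)
    (hdist : ∀ j, Measure.map (r j) P = uniformCircle)
    (S : Finset (Fin n)) (hS : 2 ≤ S.card)
    (β : Fin n → ℂ) (hβ : ∀ j ∈ S, β j ≠ 0) :
    P {ω | (∑ j ∈ S, r j ω * β j) ≠ 0 ∧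
           ∀ k < n, (∑ j ∈ S, r j ω * Complex.exp (2 * Real.pi * Complex.I / n) ^ (j : ℕ) * β j)
             ≠ Complex.exp (2 * Real.pi * Complex.I / n) ^ k * (∑ j ∈ S, r j ω * β j)} = 1 := by
  set W := Complex.exp (2 * Real.pi * Complex.I / n)
  obtain ⟨a, ha⟩ : S.Nonempty := Finset.card_pos.1 (by omega)
  have hW : IsPrimitiveRoot W n := Complex.isPrimitiveRoot_exp n a.pos.ne'
  have hmeas (j : Fin n) : AEMeasurable (r j) P :=
    .of_map_ne_zero (by rw [hdist j]; exact IsProbabilityMeasure.ne_zero _)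
  have hatoms (j : Fin n) : NullSingletonClass (P.map (r j)) := by rw [hdist j]; infer_instance
  have hy₁ : ∀ᵐ ω ∂P, ∑ j ∈ S, r j ω * β j ≠ 0 :=
    have := hatoms a; hindep.ae_sum_mul_ne_zero hmeas ha (hβ a ha)
  have hy₂ (k : ℕ) (hk : k < n) :
      ∀ᵐ ω ∂P, ∑ j ∈ S, r j ω * ((W ^ (j : ℕ) - W ^ k) * β j) ≠ 0 := by
    obtain ⟨j, hj, hjk⟩ := S.exists_mem_ne hS ⟨k, hk⟩
    have := hatoms j
    refine hindep.ae_sum_mul_ne_zero hmeas hj (mul_ne_zero (sub_ne_zero.2 fun h => ?_) (hβ j hj))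
    exact hjk (Fin.ext (hW.pow_inj j.isLt hk h))
  have hgood : ∀ᵐ ω ∂P, (∑ j ∈ S, r j ω * β j) ≠ 0 ∧
      ∀ k < n, ∑ j ∈ S, r j ω * W ^ (j : ℕ) * β j ≠ W ^ k * ∑ j ∈ S, r j ω * β j := by
    filter_upwards [hy₁, ae_all_iff.2 fun k => Filter.eventually_imp_distrib_left.2 (hy₂ k)]
      with ω hω₁ hω₂
    refine ⟨hω₁, fun k hk => sub_ne_zero.1 ?_⟩
    convert hω₂ k hk using 1
    rw [Finset.mul_sum, ← Finset.sum_sub_distrib]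
    exact Finset.sum_congr rfl fun j _ => by ring
  exact (measure_of_measure_compl_eq_zero (ae_iff.1 hgood)).trans measure_univ

/-- With `r₁,…,r_n` i.i.d. uniform on the unit circle, `W = e^{2πi/n}`,
`S ⊆ {1,…,n}` with `|S| ≥ 2`, and nonzero `β_j` for `j ∈ S`, the measurements
`y₁ = ∑_{j∈S} r_j β_j` and `y₂ = ∑_{j∈S} r_j W^{j−1} β_j` almost surely satisfy `y₁ ≠ 0`
and `y₂ ≠ W^k y₁` for every `k ∈ {0,…,n−1}` (a multiton almost surely fails the ratio
test). -/
theorem multiton_fails_ratio_test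
    {Ω : Type} [MeasurableSpace Ω] (P : Measure Ω) [IsProbabilityMeasure P]
    (n : ℕ) (hn : 2 ≤ n) (r : Fin n → Ω → ℂ)
    (hindep : iIndepFun r P)
    (hdist : ∀ j, Measure.map (r j) P = uniformCircle)
    (S : Finset (Fin n)) (hS : 2 ≤ S.card)
    (β : Fin n → ℂ) (hβ : ∀ j ∈ S, β j ≠ 0) :
    P {ω | (∑ j ∈ S, r j ω * β j) ≠ 0 ∧
           ∀ k < n, (∑ j ∈ S, r j ω * Complex.exp (2 * Real.pi * Complex.I / n) ^ (j : ℕ) * β j)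
             ≠ Complex.exp (2 * Real.pi * Complex.I / n) ^ k * (∑ j ∈ S, r j ω * β j)} = 1 :=
  multiton_fails_ratio_test_general P n r hindep hdist S hS β hβ
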